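/- arXiv:2002.00624 — 2 statements merged into one kernel-verified Lean document; each statement's English description precedes it below -/
import Mathlib

section
/- Conversely, every complex symmetric d×d matrix C with positive definite imaginary part can be written as C = P Q^{-1} with complex matrices Q, P satisfying Q^T P − P^T Q = 0 and Q^* P − P^* Q = 2i·Id; one may take Q = (Im C)^{-1/2} and P = C Q. -/
open Matrix

section

open scoped ComplexOrder

/-- The square root of a positive semidefinite matrix, as defined in the older Mathlib
(removed since). -/
noncomputable def Matrix.PosSemidef.sqrt {n : Type*} [Fintype n] [DecidableEq n]
    {𝕜 : Type*} [RCLike 𝕜] {A : Matrix n n 𝕜} (hA : A.PosSemidef) : Matrix n n 𝕜 :=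
  hA.1.eigenvectorUnitary.1 * diagonal ((↑) ∘ Real.sqrt ∘ hA.1.eigenvalues) *
    (star hA.1.eigenvectorUnitary : Matrix n n 𝕜)

end

/-!
`Q = (Im C)^{-1/2}` is a real symmetric invertible matrix, so with `P = C Q` one gets
`Qᵀ P - Pᵀ Q = Q (C - Cᵀ) Q = 0` and `Qᴴ P - Pᴴ Q = Q (C - Cᴴ) Q = 2i · Q (Im C) Q = 2i`,
where `C - Cᴴ = 2i · Im C` because `C` is symmetric.
-/

open Complex
open scoped ComplexOrder

namespace Matrix

variable {n : Type*} [Fintype n]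

section sqrt

variable [DecidableEq n] {𝕜 : Type*} [RCLike 𝕜] {A : Matrix n n 𝕜}

lemma PosSemidef.sqrt_mul_self (hA : A.PosSemidef) : hA.sqrt * hA.sqrt = A := by
  set U : Matrix n n 𝕜 := hA.1.eigenvectorUnitary.1
  set D : Matrix n n 𝕜 := diagonal ((↑) ∘ Real.sqrt ∘ hA.1.eigenvalues)
  have hUU : star U * U = 1 := Unitary.coe_star_mul_self hA.1.eigenvectorUnitary
  have hDD : D * D = diagonal ((↑) ∘ hA.1.eigenvalues) := by
    simp only [D, diagonal_mul_diagonal, Function.comp_apply, ← RCLike.ofReal_mul,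
      Real.mul_self_sqrt (hA.eigenvalues_nonneg _)]
    rfl
  calc hA.sqrt * hA.sqrt = U * D * (star U * U) * D * star U := by
        simp only [PosSemidef.sqrt, mul_assoc]; rfl
    _ = U * diagonal ((↑) ∘ hA.1.eigenvalues) * star U := by
        rw [hUU, mul_one, mul_assoc U, hDD]
    _ = A := hA.1.spectral_theorem.symm

lemma PosSemidef.isHermitian_sqrt (hA : A.PosSemidef) : hA.sqrt.IsHermitian := by
  simp only [PosSemidef.sqrt, IsHermitian, conjTranspose_mul, diagonal_conjTranspose,
    star_eq_conjTranspose, conjTranspose_conjTranspose, mul_assoc]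
  congr 3
  ext i
  simp

lemma PosDef.isUnit_sqrt (hA : A.PosDef) : IsUnit hA.posSemidef.sqrt := by
  rw [isUnit_iff_isUnit_det]
  have hdet : IsUnit (hA.posSemidef.sqrt.det * hA.posSemidef.sqrt.det) := by
    rw [← det_mul, hA.posSemidef.sqrt_mul_self, ← isUnit_iff_isUnit_det]
    exact hA.isUnit
  exact isUnit_of_mul_isUnit_left hdet

lemma PosDef.inv_sqrt_mul_mul_inv_sqrt (hA : A.PosDef) :
    hA.posSemidef.sqrt⁻¹ * A * hA.posSemidef.sqrt⁻¹ = 1 := by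
  have hS := (isUnit_iff_isUnit_det _).mp hA.isUnit_sqrt
  have hSS := hA.posSemidef.sqrt_mul_self
  generalize hA.posSemidef.sqrt = S at hS hSS ⊢
  subst hSS
  rw [← mul_assoc, nonsing_inv_mul _ hS, one_mul, mul_nonsing_inv _ hS]

end sqrt

lemma transpose_mul_mul_sub_eq_zero {R : Type*} [CommRing R] {C : Matrix n n R} (hC : Cᵀ = C)
    (Q : Matrix n n R) : Qᵀ * (C * Q) - (C * Q)ᵀ * Q = 0 := by
  rw [transpose_mul, hC, mul_assoc, sub_self]

lemma conjTranspose_mul_mul_sub {R : Type*} [CommRing R] [StarRing R] (C Q : Matrix n n R) :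
    Qᴴ * (C * Q) - (C * Q)ᴴ * Q = Qᴴ * (C - Cᴴ) * Q := by
  rw [conjTranspose_mul, mul_sub, sub_mul, mul_assoc, mul_assoc]

lemma sub_conjTranspose_of_transpose_eq {m : Type*} {C : Matrix m m ℂ} (hC : Cᵀ = C) :
    C - Cᴴ = (2 * I) • (C.map im).map ((↑) : ℝ → ℂ) := by
  ext i j
  have hji : C j i = C i j := congr_fun (congr_fun hC i) j
  simp only [sub_apply, conjTranspose_apply, hji, smul_apply, map_apply, smul_eq_mul,
    RCLike.star_def, sub_conj]
  push_cast
  ring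

lemma conjTranspose_map_ofReal {m l : Type*} (J : Matrix m l ℝ) :
    (J.map ((↑) : ℝ → ℂ))ᴴ = Jᵀ.map (↑) := by
  rw [← conjTranspose_eq_transpose_of_trivial, conjTranspose_map]
  intro r
  simp

end Matrix

/-- every complex symmetric matrix `C` with positive definite imaginary
part can be written as `C = P * Q⁻¹` with `Q, P` satisfying Hagedorn's symplecticity
relations; one may take `Q = (Im C)^{-1/2}` and `P = C * Q`. -/
theorem stmt1 (d : ℕ) (C : Matrix (Fin d) (Fin d) ℂ)
    (hsym : Cᵀ = C) (hpos : (C.map Complex.im).PosDef) :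
    ∃ Q P : Matrix (Fin d) (Fin d) ℂ,
      Qᵀ * P - Pᵀ * Q = 0 ∧
      Qᴴ * P - Pᴴ * Q = (2 * Complex.I) • (1 : Matrix (Fin d) (Fin d) ℂ) ∧
      C = P * Q⁻¹ ∧
      Q = ((hpos.posSemidef.sqrt)⁻¹).map (fun r => (r : ℂ)) ∧
      P = C * Q := by
  set J := hpos.posSemidef.sqrt⁻¹
  set Q : Matrix (Fin d) (Fin d) ℂ := J.map (↑)
  have hJ : Jᵀ = J := by
    rw [← conjTranspose_eq_transpose_of_trivial, conjTranspose_nonsing_inv,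
      (PosSemidef.isHermitian_sqrt _).eq]
  have hQ : Qᴴ = Q := by rw [conjTranspose_map_ofReal, hJ]
  have hQunit : IsUnit Q := (isUnit_nonsing_inv_iff.mpr hpos.isUnit_sqrt).map ofRealHom.mapMatrix
  refine ⟨Q, C * Q, transpose_mul_mul_sub_eq_zero hsym Q, ?_, ?_, rfl, rfl⟩
  · rw [conjTranspose_mul_mul_sub, sub_conjTranspose_of_transpose_eq hsym, hQ, Matrix.mul_smul,
      Matrix.smul_mul]
    congr 1
    change ofRealHom.mapMatrix J * ofRealHom.mapMatrix (C.map im) * ofRealHom.mapMatrix J = 1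
    rw [← map_mul, ← map_mul, hpos.inv_sqrt_mul_mul_inv_sqrt, map_one]
  · rw [mul_assoc, mul_nonsing_inv _ ((isUnit_iff_isUnit_det _).mp hQunit), mul_one]
end

section
/- Let Z = [Q; P] ∈ ℂ^{2d×d} satisfy Z^T J^T Z = 0 and Z^* J^T Z = 2i·Id (i.e. Hagedorn's relations for Q, P). Then Im(Z Z^*) = J and Re(Z Z^*) is a real symmetric, positive definite, symplectic 2d×2d matrix. -/
/-!
Put `W = [Z, Z̄]` and `D = diag(1, -1)`. The two relations are the four blocks of
`Wᴴ J W = -2i D`; as `D² = 1`, this exhibits a left inverse of `W`, hence also a right one, and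
gives `W D Wᴴ = 2i J`. Now `W Wᴴ = Z Zᴴ + Z̄ Zᵀ = 2 Re(Z Zᴴ)` and
`W D Wᴴ = Z Zᴴ - Z̄ Zᵀ = 2i Im(Z Zᴴ)`, so `Im(Z Zᴴ) = J`, `Re(Z Zᴴ) = ½ W Wᴴ` is positive definite
because `W` is invertible, and `Re(Z Zᴴ) J Re(Z Zᴴ) = ¼ W (Wᴴ J W) Wᴴ = J`.
-/

open Matrix Complex LieAlgebra.Orthogonal
open scoped ComplexOrder

namespace Matrix

section RealAndImaginaryParts

variable {n : Type*}

lemma PosDef.of_map_ofReal [Fintype n] {M : Matrix n n ℝ} (h : (M.map ofRealHom).PosDef) :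
    M.PosDef := by
  refine .of_dotProduct_mulVec_pos ?_ fun x hx => ?_
  · ext i j
    simpa using h.isHermitian.apply i j
  · have hxc : ofRealHom ∘ x ≠ 0 := by
      simpa [funext_iff] using hx
    have hstar : star (ofRealHom ∘ x) = ofRealHom ∘ x := by
      ext; simp
    have hmulVec : M.map ofRealHom *ᵥ (ofRealHom ∘ x) = ofRealHom ∘ (M *ᵥ x) :=
      funext fun i => (RingHom.map_mulVec _ _ _ i).symm
    have hpos := h.dotProduct_mulVec_pos hxc
    rw [hstar, hmulVec, ← RingHom.map_dotProduct] at hpos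
    simpa using hpos

variable {A : Matrix n n ℂ}

lemma IsHermitian.transpose_map_re (hA : A.IsHermitian) : (A.map re)ᵀ = A.map re := by
  ext i j
  simp [← hA.apply i j]

lemma IsHermitian.map_re_map_ofReal (hA : A.IsHermitian) :
    (A.map re).map ofRealHom = (2⁻¹ : ℂ) • (A + Aᵀ) := by
  ext i j
  simp only [map_apply, smul_apply, add_apply, transpose_apply, ← hA.apply j i]
  simp [add_conj]

lemma IsHermitian.map_im_map_ofReal (hA : A.IsHermitian) :
    (A.map im).map ofRealHom = (2 * I)⁻¹ • (A - Aᵀ) := by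
  ext i j
  simp only [map_apply, smul_apply, sub_apply, transpose_apply, ← hA.apply j i, smul_eq_mul,
    ofRealHom_eq_coe, star_def, sub_conj]
  field_simp
  push_cast
  ring

end RealAndImaginaryParts

section BlockMatrices

variable (l R : Type*) [DecidableEq l] [CommRing R]

lemma J_conjTranspose [StarRing R] : (J l R)ᴴ = -J l R := by
  rw [conjTranspose, J_transpose, Matrix.map_neg _ star_neg]
  exact congrArg Neg.neg (map_J l (starRingEnd R))

lemma indefiniteDiagonal_eq_fromBlocks : indefiniteDiagonal l l R = fromBlocks 1 0 0 (-1) := by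
  rw [indefiniteDiagonal, ← fromBlocks_diagonal, ← diagonal_one, ← diagonal_neg]

lemma indefiniteDiagonal_mul_self [Fintype l] :
    indefiniteDiagonal l l R * indefiniteDiagonal l l R = 1 := by
  simp [indefiniteDiagonal_eq_fromBlocks, fromBlocks_multiply]

end BlockMatrices

section FromColsConj

variable {l m α : Type*}

def fromColsConj [Star α] (Z : Matrix m l α) : Matrix m (l ⊕ l) α :=
  fromCols Z Zᴴᵀ

variable [CommRing α] [StarRing α] (Z : Matrix m l α)

lemma conjTranspose_fromColsConj : (fromColsConj Z)ᴴ = fromRows Zᴴ Zᵀ := by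
  rw [fromColsConj, conjTranspose_fromCols_eq_fromRows_conjTranspose,
    conjTranspose_transpose_eq_transpose_conjTranspose, conjTranspose_conjTranspose]

variable [Fintype l]

lemma fromColsConj_mul_conjTranspose :
    fromColsConj Z * (fromColsConj Z)ᴴ = Z * Zᴴ + (Z * Zᴴ)ᵀ := by
  rw [conjTranspose_fromColsConj, fromColsConj, fromCols_mul_fromRows, transpose_mul]

lemma fromColsConj_mul_indefiniteDiagonal_mul_conjTranspose [DecidableEq l] :
    fromColsConj Z * indefiniteDiagonal l l α * (fromColsConj Z)ᴴ = Z * Zᴴ - (Z * Zᴴ)ᵀ := by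
  rw [indefiniteDiagonal_eq_fromBlocks, conjTranspose_fromColsConj, fromColsConj,
    fromCols_mul_fromBlocks, fromCols_mul_fromRows, transpose_mul]
  simp [sub_eq_add_neg]

end FromColsConj

variable {l : Type*} [Fintype l] [DecidableEq l]

structure HagedornRelations (Z : Matrix (l ⊕ l) l ℂ) : Prop where
  transpose_mul_J_mul : Zᵀ * (J l ℂ)ᵀ * Z = 0
  conjTranspose_mul_J_mul : Zᴴ * (J l ℂ)ᵀ * Z = (2 * I) • 1

namespace HagedornRelations

variable {Z : Matrix (l ⊕ l) l ℂ} (hZ : HagedornRelations Z)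
include hZ

lemma conjTranspose_fromColsConj_mul_J_mul :
    (fromColsConj Z)ᴴ * J l ℂ * fromColsConj Z = (-(2 * I)) • indefiniteDiagonal l l ℂ := by
  have hT : Zᵀ * J l ℂ * Z = 0 := by
    simpa using hZ.transpose_mul_J_mul
  have hH : Zᴴ * J l ℂ * Z = (-(2 * I)) • 1 := by
    rw [neg_smul, ← neg_eq_iff_eq_neg]
    simpa using hZ.conjTranspose_mul_J_mul
  have hT' : Zᴴ * J l ℂ * Zᴴᵀ = 0 := by
    simpa [Matrix.mul_assoc, J_conjTranspose,
      conjTranspose_transpose_eq_transpose_conjTranspose] using congrArg conjTranspose hT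
  have hH' : Zᵀ * J l ℂ * Zᴴᵀ = (2 * I) • 1 := by
    simpa [Matrix.mul_assoc] using congrArg transpose hH
  rw [conjTranspose_fromColsConj, fromColsConj, fromRows_mul, fromRows_mul_fromCols, hT, hH, hT',
    hH', indefiniteDiagonal_eq_fromBlocks, fromBlocks_smul]
  simp

lemma fromColsConj_mul_indefiniteDiagonal_mul_conjTranspose_mul_J :
    fromColsConj Z * indefiniteDiagonal l l ℂ * (fromColsConj Z)ᴴ * J l ℂ = (-(2 * I)) • 1 := by
  set W := fromColsConj Z
  set D := indefiniteDiagonal l l ℂ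
  have hc : -(2 * I) ≠ 0 := by simp
  have hleft : ((-(2 * I))⁻¹ • (Wᴴ * J l ℂ)) * (W * D) = 1 := by
    rw [smul_mul, ← Matrix.mul_assoc, hZ.conjTranspose_fromColsConj_mul_J_mul, smul_mul, smul_smul,
      inv_mul_cancel₀ hc, one_smul, indefiniteDiagonal_mul_self]
  have hright := mul_eq_one_comm.mp hleft
  rw [Matrix.mul_smul, ← Matrix.mul_assoc] at hright
  rw [← smul_right_inj (inv_ne_zero hc), hright, smul_smul, inv_mul_cancel₀ hc, one_smul]

lemma isUnit_fromColsConj : IsUnit (fromColsConj Z) := by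
  refine IsUnit.of_mul_eq_one
    ((-(2 * I))⁻¹ • (indefiniteDiagonal l l ℂ * (fromColsConj Z)ᴴ * J l ℂ)) ?_
  rw [Matrix.mul_smul, ← Matrix.mul_assoc, ← Matrix.mul_assoc,
    hZ.fromColsConj_mul_indefiniteDiagonal_mul_conjTranspose_mul_J, smul_smul,
    inv_mul_cancel₀ (by simp), one_smul]

lemma fromColsConj_mul_indefiniteDiagonal_mul_conjTranspose_eq_smul_J :
    fromColsConj Z * indefiniteDiagonal l l ℂ * (fromColsConj Z)ᴴ = (2 * I) • J l ℂ := by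
  have h := congrArg (· * J l ℂ) hZ.fromColsConj_mul_indefiniteDiagonal_mul_conjTranspose_mul_J
  simp only [Matrix.mul_assoc, J_squared, smul_mul, Matrix.one_mul] at h
  simpa [Matrix.mul_assoc] using h

lemma map_im_mul_conjTranspose_self : (Z * Zᴴ).map im = J l ℝ := by
  apply Matrix.map_injective ofRealHom.injective
  dsimp only
  rw [(isHermitian_mul_conjTranspose_self Z).map_im_map_ofReal,
    ← fromColsConj_mul_indefiniteDiagonal_mul_conjTranspose,
    hZ.fromColsConj_mul_indefiniteDiagonal_mul_conjTranspose_eq_smul_J, smul_smul,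
    inv_mul_cancel₀ (by simp), one_smul, map_J]

lemma posDef_map_re_mul_conjTranspose_self : ((Z * Zᴴ).map re).PosDef := by
  apply PosDef.of_map_ofReal
  rw [(isHermitian_mul_conjTranspose_self Z).map_re_map_ofReal,
    ← fromColsConj_mul_conjTranspose]
  exact (PosDef.mul_conjTranspose_self _ (vecMul_injective_of_isUnit hZ.isUnit_fromColsConj)).smul
    (by norm_num)

lemma map_re_transpose_mul_J_mul_map_re :
    ((Z * Zᴴ).map re)ᵀ * J l ℝ * (Z * Zᴴ).map re = J l ℝ := by
  set W := fromColsConj Z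
  rw [(isHermitian_mul_conjTranspose_self Z).transpose_map_re]
  apply Matrix.map_injective ofRealHom.injective
  dsimp only
  rw [Matrix.map_mul, Matrix.map_mul, (isHermitian_mul_conjTranspose_self Z).map_re_map_ofReal,
    ← fromColsConj_mul_conjTranspose, map_J]
  calc (2⁻¹ : ℂ) • (W * Wᴴ) * J l ℂ * (2⁻¹ : ℂ) • (W * Wᴴ)
      = (2⁻¹ * 2⁻¹ : ℂ) • (W * (Wᴴ * J l ℂ * W) * Wᴴ) := by
        simp only [smul_mul, Matrix.mul_smul, smul_smul, Matrix.mul_assoc]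
    _ = (2⁻¹ * 2⁻¹ * -(2 * I)) • (W * indefiniteDiagonal l l ℂ * Wᴴ) := by
        rw [hZ.conjTranspose_fromColsConj_mul_J_mul, Matrix.mul_smul, Matrix.smul_mul, smul_smul,
          Matrix.mul_assoc]
    _ = J l ℂ := by
        rw [hZ.fromColsConj_mul_indefiniteDiagonal_mul_conjTranspose_eq_smul_J, smul_smul]
        ring_nf
        simp

end HagedornRelations

end Matrix

/-- if `Z = [Q; P]` satisfies Hagedorn's relations
`Zᵀ Jᵀ Z = 0` and `Z^* Jᵀ Z = 2i·Id`, then `Im(Z Z^*) = J` and `Re(Z Z^*)` is a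
real symmetric, positive definite, symplectic matrix. -/
theorem stmt15 (d : ℕ) (Z : Matrix (Fin d ⊕ Fin d) (Fin d) ℂ)
    (h1 : Zᵀ *
        (Matrix.fromBlocks 0 (-1) 1 0 :
          Matrix (Fin d ⊕ Fin d) (Fin d ⊕ Fin d) ℂ)ᵀ * Z
        = (0 : Matrix (Fin d) (Fin d) ℂ))
    (h2 : Zᴴ *
        (Matrix.fromBlocks 0 (-1) 1 0 :
          Matrix (Fin d ⊕ Fin d) (Fin d ⊕ Fin d) ℂ)ᵀ * Z
        = (2 * Complex.I) • (1 : Matrix (Fin d) (Fin d) ℂ)) :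
    ((Z * Zᴴ).map Complex.im)
        = (Matrix.fromBlocks 0 (-1) 1 0 :
            Matrix (Fin d ⊕ Fin d) (Fin d ⊕ Fin d) ℝ) ∧
    ((Z * Zᴴ).map Complex.re)ᵀ = (Z * Zᴴ).map Complex.re ∧
    ((Z * Zᴴ).map Complex.re).PosDef ∧
    ((Z * Zᴴ).map Complex.re)ᵀ *
        (Matrix.fromBlocks 0 (-1) 1 0 :
          Matrix (Fin d ⊕ Fin d) (Fin d ⊕ Fin d) ℝ) *
        ((Z * Zᴴ).map Complex.re)
      = (Matrix.fromBlocks 0 (-1) 1 0 :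
          Matrix (Fin d ⊕ Fin d) (Fin d ⊕ Fin d) ℝ) := by
  have hZ : HagedornRelations Z := ⟨h1, h2⟩
  exact ⟨hZ.map_im_mul_conjTranspose_self,
    (isHermitian_mul_conjTranspose_self Z).transpose_map_re,
    hZ.posDef_map_re_mul_conjTranspose_self,
    hZ.map_re_transpose_mul_J_mul_map_re⟩
end
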